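/- arXiv:1703.06519 — 2 statements merged into one kernel-verified Lean document; each statement's English description precedes it below -/
import Mathlib

section
/- (Discrete nonlinear Gronwall inequality) Let D ≥ 0 and h > 0. Suppose {x_k}_{k≥0} is a sequence of real numbers satisfying |x_k| ≤ |x_{k−1}|(1 + D|x_{k−1}|² h) for all k ≥ 1. Define Φ(x) = ∫₁^x ds/(s + Ds³) for x > 0, which is strictly increasing, hence invertible on its range. Then for all k ≥ 0 (for which the right side is defined), |x_k| ≤ Φ^{−1}(Φ(|x₀|) + k h). -/
/-!
Along the flow of `x' = g x`, the potential `Φ(x) = ∫₁ˣ ds / g s` grows at unit speed. For a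
positive increasing `g`, one explicit Euler step `a ↦ a + h g(a)` raises `Φ` by at most `h`,
because `1 / g ≤ 1 / g(a)` on `[a, a + h g(a)]`. Summing over `k` steps gives
`Φ(xₖ) ≤ Φ(x₀) + k h`, and monotonicity of `Φ` inverts this. The scheme
`|xₖ| ≤ |xₖ₋₁| (1 + D |xₖ₋₁|² h)` is dominated by Euler steps for `g(s) = s + D s³`.
-/

open Real MeasureTheory Set

noncomputable def gronwallPotential (g : ℝ → ℝ) (y : ℝ) : ℝ :=
  ∫ s in (1 : ℝ)..y, 1 / g s

section GronwallPotential

variable {g : ℝ → ℝ}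

theorem intervalIntegrable_one_div_of_monotoneOn (hg_pos : ∀ s, 0 < s → 0 < g s)
    (hg_mono : MonotoneOn g (Ioi 0)) {a b : ℝ} (ha : 0 < a) (hb : 0 < b) :
    IntervalIntegrable (fun s => 1 / g s) volume a b := by
  have hsub : uIcc a b ⊆ Ioi 0 := fun s hs => lt_of_lt_of_le (lt_min ha hb) hs.1
  refine AntitoneOn.intervalIntegrable fun s hs t ht hst => ?_
  exact one_div_le_one_div_of_le (hg_pos s (hsub hs)) (hg_mono (hsub hs) (hsub ht) hst)

theorem gronwallPotential_sub (hg_pos : ∀ s, 0 < s → 0 < g s) (hg_mono : MonotoneOn g (Ioi 0))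
    {a b : ℝ} (ha : 0 < a) (hb : 0 < b) :
    gronwallPotential g b - gronwallPotential g a = ∫ s in a..b, 1 / g s :=
  intervalIntegral.integral_interval_sub_left
    (intervalIntegrable_one_div_of_monotoneOn hg_pos hg_mono one_pos hb)
    (intervalIntegrable_one_div_of_monotoneOn hg_pos hg_mono one_pos ha)

theorem strictMonoOn_gronwallPotential (hg_pos : ∀ s, 0 < s → 0 < g s)
    (hg_mono : MonotoneOn g (Ioi 0)) : StrictMonoOn (gronwallPotential g) (Ioi 0) := by
  intro a (ha : 0 < a) b (hb : 0 < b) hab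
  have hpos : 0 < ∫ s in a..b, 1 / g s :=
    intervalIntegral.intervalIntegral_pos_of_pos_on
      (intervalIntegrable_one_div_of_monotoneOn hg_pos hg_mono ha hb)
      (fun s hs => one_div_pos.mpr (hg_pos s (ha.trans hs.1))) hab
  linarith [gronwallPotential_sub hg_pos hg_mono ha hb]

theorem gronwallPotential_euler_step_le (hg_pos : ∀ s, 0 < s → 0 < g s)
    (hg_mono : MonotoneOn g (Ioi 0)) {a h : ℝ} (ha : 0 < a) (hh : 0 ≤ h) :
    gronwallPotential g (a + h * g a) ≤ gronwallPotential g a + h := by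
  have hga := hg_pos a ha
  have hab : a ≤ a + h * g a := le_add_of_nonneg_right (by positivity)
  have hb : 0 < a + h * g a := ha.trans_le hab
  have hbound : ∫ s in a..a + h * g a, 1 / g s ≤ ∫ _ in a..a + h * g a, 1 / g a :=
    intervalIntegral.integral_mono_on hab
      (intervalIntegrable_one_div_of_monotoneOn hg_pos hg_mono ha hb) intervalIntegrable_const
      fun s hs => one_div_le_one_div_of_le hga (hg_mono ha (ha.trans_le hs.1) hs.1)
  have hconst : ∫ _ in a..a + h * g a, 1 / g a = h := by
    rw [intervalIntegral.integral_const, smul_eq_mul]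
    field_simp
    ring
  linarith [gronwallPotential_sub hg_pos hg_mono ha hb]

/-- `g 0 = 0` makes `0` an equilibrium, so once the sequence vanishes it stays at `0`. -/
theorem gronwallPotential_le_of_euler (hg_pos : ∀ s, 0 < s → 0 < g s)
    (hg_mono : MonotoneOn g (Ioi 0)) (hg_zero : g 0 = 0) {h : ℝ} (hh : 0 ≤ h) {a : ℕ → ℝ}
    (ha : ∀ k, 0 ≤ a k) (hstep : ∀ k, a (k + 1) ≤ a k + h * g (a k)) :
    ∀ n, 0 < a n → gronwallPotential g (a n) ≤ gronwallPotential g (a 0) + n * h := by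
  intro n
  induction n with
  | zero => simp
  | succ n ih =>
    intro hn
    have han : 0 < a n := by
      refine (ha n).lt_of_ne fun hzero => ?_
      have := hstep n
      rw [← hzero, hg_zero, mul_zero, add_zero] at this
      exact this.not_gt hn
    have hmono := (strictMonoOn_gronwallPotential hg_pos hg_mono).monotoneOn hn
      (show 0 < a n + h * g (a n) from hn.trans_le (hstep n)) (hstep n)
    have := gronwallPotential_euler_step_le hg_pos hg_mono han hh
    push_cast
    linarith [ih han]

end GronwallPotential

theorem stmt6_general (D h : ℝ) (hD : 0 ≤ D) (hh : 0 < h) (x : ℕ → ℝ)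
    (hx : ∀ k : ℕ, 1 ≤ k → |x k| ≤ |x (k - 1)| * (1 + D * |x (k - 1)|^2 * h))
    (Φ : ℝ → ℝ) (hΦ : ∀ y : ℝ, Φ y = ∫ s in (1:ℝ)..y, 1 / (s + D * s^3)) :
    StrictMonoOn Φ (Set.Ioi 0) ∧
    ∀ (k : ℕ) (y : ℝ), 0 < y → Φ y = Φ |x 0| + k * h → |x k| ≤ y := by
  obtain rfl : Φ = gronwallPotential (fun s => s + D * s ^ 3) := funext hΦ
  have hg_pos : ∀ s : ℝ, 0 < s → 0 < s + D * s ^ 3 := fun s hs => by positivity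
  have hg_mono : MonotoneOn (fun s : ℝ => s + D * s ^ 3) (Ioi 0) := fun s hs t _ hst =>
    add_le_add hst (mul_le_mul_of_nonneg_left (pow_le_pow_left₀ (le_of_lt hs) hst 3) hD)
  have hΦ_mono := strictMonoOn_gronwallPotential hg_pos hg_mono
  refine ⟨hΦ_mono, fun k y hy hΦy => ?_⟩
  -- The scheme is an Euler step for `s + D s³` with the linear part `h |xₖ|` dropped.
  have hstep : ∀ k, |x (k + 1)| ≤ |x k| + h * (|x k| + D * |x k| ^ 3) := fun k => by
    have := hx (k + 1) (Nat.le_add_left 1 k)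
    rw [Nat.add_sub_cancel] at this
    nlinarith [mul_nonneg hh.le (abs_nonneg (x k))]
  rcases (abs_nonneg (x k)).eq_or_lt with hzero | hpos
  · exact hzero ▸ hy.le
  · have := gronwallPotential_le_of_euler hg_pos hg_mono (by simp) hh.le
      (fun k => abs_nonneg (x k)) hstep k hpos
    exact (hΦ_mono.le_iff_le hpos hy).mp (hΦy ▸ this)

theorem stmt6 (D h : ℝ) (hD : 0 ≤ D) (hh : 0 < h) (x : ℕ → ℝ)
    (hx : ∀ k : ℕ, 1 ≤ k → |x k| ≤ |x (k - 1)| * (1 + D * |x (k - 1)|^2 * h))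
    (hx0 : x 0 ≠ 0)
    (Φ : ℝ → ℝ) (hΦ : ∀ y : ℝ, Φ y = ∫ s in (1:ℝ)..y, 1 / (s + D * s^3)) :
    StrictMonoOn Φ (Set.Ioi 0) ∧
    ∀ (k : ℕ) (y : ℝ), 0 < y → Φ y = Φ |x 0| + k * h → |x k| ≤ y :=
  stmt6_general D h hD hh x hx Φ hΦ
end

section
/- For U^0(x,t) = (2/√π)∫₀^{r(x,t)/(2√t)} e^{−y²} dy with r the signed distance to the mean curvature flow M_t, one has (∂_t − Δ)U^0(x,t) = (H_{{r=r(x,t)}}(x) − H_{{r=0}}(Π(x)))·∂_r U^0(x,t), where H_{{r=c}} denotes the mean curvature of the level set at signed distance c from M_t and Π(x) is the nearest point projection onto M_t. In particular, the right-hand side equals (1/√(πt)) exp(−r²/(4t)) · r(x,t) · Σ_{i=1}^n κ_i²/(1 − r κ_i), where κ_i are the principal curvatures of M_t at Π(x). -/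
open Real MeasureTheory

/-!
With `z = r/(2√t)` we have `U⁰ = erf z`. The chain rule gives
`∂ₜU⁰ = erf' z · (∂ₜr/(2√t) - r/(4t√t))` and `ΔU⁰ = erf' z · Δr/(2√t) + erf'' z · |∇r|²/(4t)`.
Because `erf'' z = -2z · erf' z` and `|∇r| = 1`, the two terms containing neither `∂ₜr` nor `Δr`
cancel exactly; what is left is `erf' z/(2√t) · (∂ₜr - Δr) = (H - H₀) · e^{-r²/4t}/√(πt)`.
Finally `H - H₀ = r ∑ κᵢ²/(1 - rκᵢ)` termwise.
-/

/-- The Laplacian of a function on Euclidean space, as the sum of the second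
partial derivatives along the coordinate directions. -/
noncomputable def lap {n : ℕ} (g : EuclideanSpace ℝ (Fin n) → ℝ)
    (x : EuclideanSpace ℝ (Fin n)) : ℝ :=
  ∑ i, fderiv ℝ (fun y => fderiv ℝ g y (EuclideanSpace.single i 1)) x
    (EuclideanSpace.single i 1)

noncomputable def erf (z : ℝ) : ℝ := 2 / √π * ∫ u in (0 : ℝ)..z, exp (-u ^ 2)

theorem hasDerivAt_erf (z : ℝ) : HasDerivAt erf (2 / √π * exp (-z ^ 2)) z := by
  have hc : Continuous fun u : ℝ => exp (-u ^ 2) := by fun_prop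
  exact (intervalIntegral.integral_hasDerivAt_right (hc.intervalIntegrable _ _)
    (hc.stronglyMeasurableAtFilter _ _) hc.continuousAt).const_mul _

theorem hasDerivAt_gaussian (z : ℝ) :
    HasDerivAt (fun w => 2 / √π * exp (-w ^ 2)) (-2 * z * (2 / √π * exp (-z ^ 2))) z := by
  refine ((((hasDerivAt_pow 2 z).fun_neg).exp).const_mul (2 / √π)).congr_deriv ?_
  push_cast
  ring

theorem HasDerivAt.erf_div_two_sqrt {f : ℝ → ℝ} {f' t : ℝ} (hf : HasDerivAt f f' t) (ht : 0 < t) :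
    HasDerivAt (fun s => erf (f s / (2 * √s)))
      (2 / √π * Real.exp (-(f t / (2 * √t)) ^ 2) * (f' / (2 * √t) - f t / (4 * t * √t))) t := by
  have hden : HasDerivAt (fun s => 2 * √s) (1 / √t) t := by
    refine ((hasDerivAt_sqrt ht.ne').const_mul 2).congr_deriv ?_
    field_simp
  refine ((hasDerivAt_erf _).comp t (hf.fun_div hden (by positivity))).congr_deriv ?_
  have hs : √t ^ 2 = t := sq_sqrt ht.le
  field_simp
  rw [hs]
  ring

theorem hasDerivAt_erf_div_const (c w : ℝ) :
    HasDerivAt (fun w => erf (w / c)) (2 / √π * exp (-(w / c) ^ 2) / c) w := by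
  refine ((hasDerivAt_erf (w / c)).comp w ((hasDerivAt_id w).div_const c)).congr_deriv ?_
  ring

theorem hasDerivAt_gaussian_div_const (c w : ℝ) :
    HasDerivAt (fun w => 2 / √π * exp (-(w / c) ^ 2) / c)
      (-2 * (w / c) * (2 / √π * exp (-(w / c) ^ 2)) / c / c) w := by
  have h := ((hasDerivAt_gaussian (w / c)).comp w ((hasDerivAt_id w).div_const c)).div_const c
  simpa [Function.comp_def, div_eq_mul_inv, mul_assoc] using h

section Laplacian

variable {m : ℕ}

theorem fderiv_single_eq_gradient (g : EuclideanSpace ℝ (Fin m) → ℝ)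
    (x : EuclideanSpace ℝ (Fin m)) (i : Fin m) :
    fderiv ℝ g x (EuclideanSpace.single i 1) = gradient g x i := by
  rw [gradient, ← InnerProductSpace.toDual_symm_apply, EuclideanSpace.inner_single_right]
  simp

theorem sum_sq_fderiv_single (g : EuclideanSpace ℝ (Fin m) → ℝ)
    (x : EuclideanSpace ℝ (Fin m)) :
    ∑ i, fderiv ℝ g x (EuclideanSpace.single i 1) ^ 2 = ‖gradient g x‖ ^ 2 := by
  simp only [fderiv_single_eq_gradient, EuclideanSpace.norm_eq, Real.norm_eq_abs, sq_abs]
  rw [sq_sqrt (by positivity)]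

theorem lap_comp {φ φ' : ℝ → ℝ} {φ'' : ℝ} {g : EuclideanSpace ℝ (Fin m) → ℝ}
    {x : EuclideanSpace ℝ (Fin m)} (hφ : ∀ w, HasDerivAt φ (φ' w) w)
    (hφ' : HasDerivAt φ' φ'' (g x)) (hg : ContDiff ℝ 2 g) :
    lap (fun y => φ (g y)) x = φ' (g x) * lap g x + φ'' * ‖gradient g x‖ ^ 2 := by
  have hgd : Differentiable ℝ g := hg.differentiable (by norm_num)
  have hDg : Differentiable ℝ (fderiv ℝ g) :=
    (hg.fderiv_right (m := 1) (by norm_num)).differentiable one_ne_zero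
  have hD : ∀ v, (fun y => fderiv ℝ (fun y => φ (g y)) y v)
      = fun y => φ' (g y) * fderiv ℝ g y v := by
    intro v; funext y
    change fderiv ℝ (φ ∘ g) y v = _
    rw [((hφ (g y)).comp_hasFDerivAt y (hgd y).hasFDerivAt).fderiv]
    rfl
  have hφ'g : HasFDerivAt (fun y => φ' (g y)) (φ'' • fderiv ℝ g x) x :=
    hφ'.comp_hasFDerivAt x (hgd x).hasFDerivAt
  have hsecond : ∀ v, fderiv ℝ (fun y => φ' (g y) * fderiv ℝ g y v) x v
      = φ' (g x) * fderiv ℝ (fun y => fderiv ℝ g y v) x v + φ'' * fderiv ℝ g x v ^ 2 := by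
    intro v
    have hv : DifferentiableAt ℝ (fun y => fderiv ℝ g y v) x :=
      (hDg x).clm_apply (differentiableAt_const v)
    rw [fderiv_fun_mul hφ'g.differentiableAt hv, hφ'g.fderiv]
    simp only [add_apply, smul_apply, smul_eq_mul]
    ring
  simp only [lap, hD, hsecond, Finset.sum_add_distrib, ← Finset.mul_sum, sum_sq_fderiv_single]

end Laplacian

theorem sum_div_one_sub_mul_sub_sum {ι : Type*} (s : Finset ι) (κ : ι → ℝ) (r : ℝ)
    (hκ : ∀ i ∈ s, 1 - r * κ i ≠ 0) :
    ∑ i ∈ s, κ i / (1 - r * κ i) - ∑ i ∈ s, κ i = r * ∑ i ∈ s, κ i ^ 2 / (1 - r * κ i) := by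
  rw [← Finset.sum_sub_distrib, Finset.mul_sum]
  refine Finset.sum_congr rfl fun i hi => ?_
  rw [div_sub' (hκ i hi)]
  ring

theorem stmt14 (n : ℕ)
    (r : EuclideanSpace ℝ (Fin (n + 1)) → ℝ → ℝ)
    (H H₀ : EuclideanSpace ℝ (Fin (n + 1)) → ℝ → ℝ)
    -- `κ i x t` : the `i`-th principal curvature of `M_t` at the projection `Π(x)` of `x`
    (κ : Fin n → EuclideanSpace ℝ (Fin (n + 1)) → ℝ → ℝ)
    (hr : ContDiff ℝ 2 (fun p : EuclideanSpace ℝ (Fin (n + 1)) × ℝ => r p.1 p.2))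
    (heik : ∀ x t, ‖gradient (fun y => r y t) x‖ = 1)
    (hκ : ∀ i x t, |r x t * κ i x t| < 1)
    -- mean curvature of the level set `{r = r(x,t)}` at `x`
    (hH : ∀ x t, H x t = ∑ i, κ i x t / (1 - r x t * κ i x t))
    -- mean curvature of `M_t = {r = 0}` at `Π(x)`
    (hH₀ : ∀ x t, H₀ x t = ∑ i, κ i x t)
    -- `M_t` evolves by mean curvature
    (hrt : ∀ x t, deriv (fun s => r x s) t = - H₀ x t)
    (hlap : ∀ x t, lap (fun y => r y t) x = - H x t)
    (x : EuclideanSpace ℝ (Fin (n + 1))) (t : ℝ) (ht : 0 < t)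
    (U0 : EuclideanSpace ℝ (Fin (n + 1)) → ℝ → ℝ)
    (hU0 : ∀ y s, U0 y s =
      (2 / Real.sqrt π) * ∫ u in (0:ℝ)..(r y s / (2 * Real.sqrt s)), Real.exp (-u^2)) :
    deriv (fun s => U0 x s) t - lap (fun y => U0 y t) x
      = (H x t - H₀ x t) * (1 / Real.sqrt (π * t) * Real.exp (-(r x t)^2 / (4 * t)))
    ∧ (H x t - H₀ x t) * (1 / Real.sqrt (π * t) * Real.exp (-(r x t)^2 / (4 * t)))
      = 1 / Real.sqrt (π * t) * Real.exp (-(r x t)^2 / (4 * t)) *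
          (r x t * ∑ i, (κ i x t)^2 / (1 - r x t * κ i x t)) := by
  have hU : ∀ y s, U0 y s = erf (r y s / (2 * √s)) := hU0
  have hrx : HasDerivAt (fun s => r x s) (-H₀ x t) t := by
    rw [← hrt]
    exact ((hr.comp (contDiff_const.prodMk contDiff_id)).differentiable
      (by norm_num) t).hasDerivAt
  have hry : ContDiff ℝ 2 (fun y => r y t) := hr.comp (contDiff_id.prodMk contDiff_const)
  set c := 2 * √t with hc
  set z := r x t / c with hz
  set G := 2 / √π * exp (-z ^ 2) with hG
  have hdt : deriv (fun s => U0 x s) t = G * (-H₀ x t / c - r x t / (4 * t * √t)) := by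
    simp only [hU]
    exact (hrx.erf_div_two_sqrt ht).deriv
  have hdx : lap (fun y => U0 y t) x = G / c * -H x t + -2 * z * G / c / c := by
    simp only [hU]
    rw [lap_comp (hasDerivAt_erf_div_const c) (hasDerivAt_gaussian_div_const c _) hry, hlap,
      heik, one_pow, mul_one]
  have hst : √t ^ 2 = t := sq_sqrt ht.le
  have hGexp : G = 2 / √π * exp (-r x t ^ 2 / (4 * t)) := by
    rw [hG, hz, hc, div_pow, mul_pow, hst]
    ring_nf
  have h1 : ∀ i, 1 - r x t * κ i x t ≠ 0 := fun i =>
    (sub_pos.mpr (abs_lt.mp (hκ i x t)).2).ne'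
  refine ⟨?_, ?_⟩
  · rw [hdt, hdx, hz, hGexp, hc, sqrt_mul pi_pos.le]
    have : 0 < √t := sqrt_pos.mpr ht
    have : 0 < √π := sqrt_pos.mpr pi_pos
    field_simp
    rw [hst]
    ring
  · rw [hH, hH₀, sum_div_one_sub_mul_sub_sum _ _ _ fun i _ => h1 i]
    ring
end
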